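/- arXiv:2511.01904 — 2 statements merged into one kernel-verified Lean document; each statement's English description precedes it below -/
import Mathlib

section
/- The two eigenvalues λ₁ ≥ λ₂ of B satisfy λ₁·λ₂ = 2·auc − 1 − (1/4)(sen − spe)² = gid − (1/4)(sen − spe)². -/
/-- For a binary problem, the two eigenvalues `λ₁ ≥ λ₂` of `B = (P + Pᵀ)/2` satisfy
`λ₁·λ₂ = 2·auc − 1 − (1/4)(sen − spe)² = gid − (1/4)(sen − spe)²`, where `sen = p11`,
`spe = p22`, `auc = (sen + spe)/2` and `gid = 2·auc − 1`. -/
theorem eigenvalues_prod (p11 p12 p21 p22 : ℝ)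
    (h11 : p11 ∈ Set.Icc (0:ℝ) 1) (h12 : p12 ∈ Set.Icc (0:ℝ) 1)
    (h21 : p21 ∈ Set.Icc (0:ℝ) 1) (h22 : p22 ∈ Set.Icc (0:ℝ) 1)
    (hc1 : p11 + p21 = 1) (hc2 : p22 + p12 = 1) :
    2⁻¹ * (p11 + p22 + Real.sqrt ((p11 - p22) ^ 2 + (p12 + p21) ^ 2)) *
        (2⁻¹ * (p11 + p22 - Real.sqrt ((p11 - p22) ^ 2 + (p12 + p21) ^ 2))) =
      2 * ((p11 + p22) / 2) - 1 - (1 / 4) * (p11 - p22) ^ 2 ∧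
    2⁻¹ * (p11 + p22 + Real.sqrt ((p11 - p22) ^ 2 + (p12 + p21) ^ 2)) *
        (2⁻¹ * (p11 + p22 - Real.sqrt ((p11 - p22) ^ 2 + (p12 + p21) ^ 2))) =
      (2 * ((p11 + p22) / 2) - 1) - (1 / 4) * (p11 - p22) ^ 2 := by
  have hs : Real.sqrt ((p11 - p22) ^ 2 + (p12 + p21) ^ 2) ^ 2
      = (p11 - p22) ^ 2 + (p12 + p21) ^ 2 :=
    Real.sq_sqrt (by positivity)
  have e1 : p21 = 1 - p11 := by linarith
  have e2 : p12 = 1 - p22 := by linarith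
  subst e1; subst e2
  constructor <;> linear_combination (-(1:ℝ)/4) * hs
end

section
/- The smaller eigenvalue λ₂ of B is nonpositive if and only if auc ≤ 1/2 + (1/8)(sen − spe)², equivalently if and only if gid ≤ (1/4)(sen − spe)². -/
/-- For a binary problem, the smaller eigenvalue `λ₂` of `B = (P + Pᵀ)/2` is
nonpositive iff `auc ≤ 1/2 + (1/8)(sen − spe)²`, equivalently iff
`gid ≤ (1/4)(sen − spe)²`, where `sen = p11`, `spe = p22`, `auc = (sen + spe)/2`
and `gid = 2·auc − 1`. -/
theorem lambda2_nonpos_iff (p11 p12 p21 p22 : ℝ)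
    (h11 : p11 ∈ Set.Icc (0:ℝ) 1) (h12 : p12 ∈ Set.Icc (0:ℝ) 1)
    (h21 : p21 ∈ Set.Icc (0:ℝ) 1) (h22 : p22 ∈ Set.Icc (0:ℝ) 1)
    (hc1 : p11 + p21 = 1) (hc2 : p22 + p12 = 1) :
    (2⁻¹ * (p11 + p22 - Real.sqrt ((p11 - p22) ^ 2 + (p12 + p21) ^ 2)) ≤ 0 ↔
      (p11 + p22) / 2 ≤ 1 / 2 + (1 / 8) * (p11 - p22) ^ 2) ∧
    (2⁻¹ * (p11 + p22 - Real.sqrt ((p11 - p22) ^ 2 + (p12 + p21) ^ 2)) ≤ 0 ↔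
      2 * ((p11 + p22) / 2) - 1 ≤ (1 / 4) * (p11 - p22) ^ 2) := by
  have hp21 : p21 = 1 - p11 := by linarith
  have hp12 : p12 = 1 - p22 := by linarith
  subst hp21 hp12
  have hs : (0:ℝ) ≤ p11 + p22 := by
    have := h11.1; have := h22.1; linarith
  have hy : (0:ℝ) ≤ (p11 - p22) ^ 2 + ((1 - p22) + (1 - p11)) ^ 2 := by positivity
  have key : 2⁻¹ * (p11 + p22 - Real.sqrt ((p11 - p22) ^ 2 + ((1 - p22) + (1 - p11)) ^ 2)) ≤ 0 ↔
      (p11 + p22) ^ 2 ≤ (p11 - p22) ^ 2 + ((1 - p22) + (1 - p11)) ^ 2 := by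
    rw [show (2:ℝ)⁻¹ * (p11 + p22 - Real.sqrt ((p11 - p22) ^ 2 + ((1 - p22) + (1 - p11)) ^ 2)) ≤ 0
        ↔ p11 + p22 ≤ Real.sqrt ((p11 - p22) ^ 2 + ((1 - p22) + (1 - p11)) ^ 2) by
      constructor <;> intro h <;> nlinarith [h]]
    exact Real.le_sqrt hs hy
  constructor
  · rw [key]; constructor <;> intro h <;> nlinarith
  · rw [key]; constructor <;> intro h <;> nlinarith
end
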